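/- arXiv:1410.5748 — 2 statements merged into one kernel-verified Lean document; each statement's English description precedes it below -/
import Mathlib

section
/- For every strictly decreasing bijection η:(0,1]→[0,∞), the map φ ↦ η⁻¹∘φ∘η is a one-to-one correspondence from Φ₁ onto Ψ₁. -/
instance : Nonempty (Set.Ioc (0:ℝ) 1) := ⟨⟨1, by norm_num⟩⟩

/-- Φ₁ on functions [0,∞) → [0,∞). -/
def Phi1 (φ : Set.Ici (0:ℝ) → Set.Ici (0:ℝ)) : Prop :=
  ∀ ε : ℝ, 0 < ε → ∃ δ : ℝ, δ > ε ∧ ∀ s : Set.Ici (0:ℝ), ε < (s:ℝ) → (s:ℝ) < δ → (φ s : ℝ) ≤ ε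

/-- Ψ₁ on functions (0,1] → (0,1]. -/
def Psi1 (ψ : Set.Ioc (0:ℝ) 1 → Set.Ioc (0:ℝ) 1) : Prop :=
  ∀ r : ℝ, 0 < r → r < 1 → ∃ ρ : ℝ, r < ρ ∧ ρ < 1 ∧
    ∀ τ : Set.Ioc (0:ℝ) 1, 1 - r > (τ:ℝ) → (τ:ℝ) > 1 - ρ → (ψ τ : ℝ) ≥ 1 - r

lemma conj_key {η : Set.Ioc (0:ℝ) 1 → Set.Ici (0:ℝ)}
    (hbij : Function.Bijective η)
    (hdec : ∀ a b : Set.Ioc (0:ℝ) 1, (a:ℝ) < (b:ℝ) → (η b : ℝ) < (η a : ℝ))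
    (φ : Set.Ici (0:ℝ) → Set.Ici (0:ℝ)) :
    Phi1 φ ↔ Psi1 (Function.invFun η ∘ φ ∘ η) := by
  set e := Function.invFun η with he
  have hre : ∀ y, η (e y) = y := Function.rightInverse_invFun hbij.2
  have hli : ∀ x, e (η x) = x := Function.leftInverse_invFun hbij.1
  have hdecr : ∀ a b : Set.Ioc (0:ℝ) 1, (η b : ℝ) < (η a : ℝ) → (a:ℝ) < (b:ℝ) := by
    intro a b h
    rcases lt_trichotomy (a:ℝ) (b:ℝ) with h1 | h1 | h1
    · exact h1
    · rw [Subtype.ext h1] at h; exact absurd h (lt_irrefl _)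
    · exact absurd (hdec b a h1) (by linarith)
  have hdec_le : ∀ a b : Set.Ioc (0:ℝ) 1, (a:ℝ) ≤ (b:ℝ) → (η b : ℝ) ≤ (η a : ℝ) := by
    intro a b h
    rcases eq_or_lt_of_le h with h1 | h1
    · rw [Subtype.ext h1]
    · exact (hdec a b h1).le
  have he_lt : ∀ x y : Set.Ici (0:ℝ), (x:ℝ) < (y:ℝ) → (e y : ℝ) < (e x : ℝ) := by
    intro x y h
    refine hdecr (e y) (e x) ?_
    rw [hre, hre]; exact h
  have he_le : ∀ x y : Set.Ici (0:ℝ), (x:ℝ) ≤ (y:ℝ) → (e y : ℝ) ≤ (e x : ℝ) := by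
    intro x y h
    rcases eq_or_lt_of_le h with h1 | h1
    · rw [Subtype.ext h1]
    · exact (he_lt x y h1).le
  have one_mem : (1:ℝ) ∈ Set.Ioc (0:ℝ) 1 := by norm_num
  have η1 : (η ⟨1, one_mem⟩ : ℝ) = 0 := by
    obtain ⟨t0, ht0⟩ := hbij.2 ⟨0, by norm_num⟩
    have h1 : (η ⟨1, one_mem⟩ : ℝ) ≤ (η t0 : ℝ) := hdec_le t0 ⟨1, one_mem⟩ t0.2.2
    have h2 : (η t0 : ℝ) = 0 := by rw [ht0]
    have h3 : (0:ℝ) ≤ (η ⟨1, one_mem⟩ : ℝ) := (η ⟨1, one_mem⟩).2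
    linarith
  have ηpos : ∀ t : Set.Ioc (0:ℝ) 1, (t:ℝ) < 1 → 0 < (η t : ℝ) := by
    intro t ht
    have := hdec t ⟨1, one_mem⟩ ht
    rwa [η1] at this
  constructor
  · intro hφ r hr0 hr1
    have ht_mem : (1 - r) ∈ Set.Ioc (0:ℝ) 1 := ⟨by linarith, by linarith⟩
    set t : Set.Ioc (0:ℝ) 1 := ⟨1 - r, ht_mem⟩ with hts
    have htlt1 : (t:ℝ) < 1 := by simp [hts]; linarith
    obtain ⟨δ, hδε, hδ⟩ := hφ (η t : ℝ) (ηpos t htlt1)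
    have hδ0 : (0:ℝ) ≤ δ := le_of_lt (lt_of_le_of_lt (η t).2 hδε)
    set d : Set.Ici (0:ℝ) := ⟨δ, hδ0⟩ with hds
    set u : Set.Ioc (0:ℝ) 1 := e d with hus
    have hηu : (η u : ℝ) = δ := by rw [hus, hre]
    have hut : (u:ℝ) < (t:ℝ) := by
      have : (e d : ℝ) < (e (η t) : ℝ) := he_lt (η t) d hδε
      rwa [hli] at this
    refine ⟨1 - (u:ℝ), by simp only [hts] at hut; linarith, by have := u.2.1; linarith, ?_⟩
    intro τ hτ1 hτ2
    have hτu : (u:ℝ) < (τ:ℝ) := by linarith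
    have hτt : (τ:ℝ) < (t:ℝ) := by simp only [hts]; linarith
    have h1 : (η t : ℝ) < (η τ : ℝ) := hdec τ t hτt
    have h2 : (η τ : ℝ) < δ := by rw [← hηu]; exact hdec u τ hτu
    have h3 : (φ (η τ) : ℝ) ≤ (η t : ℝ) := hδ (η τ) h1 h2
    have h4 : (e (η t) : ℝ) ≤ (e (φ (η τ)) : ℝ) := he_le (φ (η τ)) (η t) h3
    rw [hli] at h4
    simpa only [Function.comp_apply, hts, ge_iff_le] using h4
  · intro hψ ε hε
    set t : Set.Ioc (0:ℝ) 1 := e ⟨ε, hε.le⟩ with hts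
    have hηt : (η t : ℝ) = ε := by rw [hts, hre]
    have ht1 : (t:ℝ) < 1 := by
      rcases lt_or_eq_of_le t.2.2 with h | h
      · exact h
      · exfalso
        have : t = ⟨1, one_mem⟩ := Subtype.ext h
        rw [this, η1] at hηt; linarith
    obtain ⟨ρ, hrρ, hρ1, hψ'⟩ := hψ (1 - (t:ℝ)) (by linarith) (by have := t.2.1; linarith)
    have hu_mem : (1 - ρ) ∈ Set.Ioc (0:ℝ) 1 := ⟨by linarith, by have := t.2.1; linarith⟩
    set u : Set.Ioc (0:ℝ) 1 := ⟨1 - ρ, hu_mem⟩ with hus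
    have hut : (u:ℝ) < (t:ℝ) := by simp only [hus]; linarith
    refine ⟨(η u : ℝ), by rw [← hηt]; exact hdec u t hut, ?_⟩
    intro s hs1 hs2
    set τ : Set.Ioc (0:ℝ) 1 := e s with hτs
    have hητ : (η τ : ℝ) = (s:ℝ) := by rw [hτs, hre]
    have h1 : (τ:ℝ) < (t:ℝ) := hdecr τ t (by rw [hητ, hηt]; exact hs1)
    have h2 : (u:ℝ) < (τ:ℝ) := hdecr u τ (by rw [hητ]; exact hs2)
    have h3 := hψ' τ (by linarith) (by simp only [hus] at h2; linarith)
    simp only [Function.comp_apply, ge_iff_le] at h3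
    -- h3 : 1 - (1 - t) ≤ (e (φ (η τ)) : ℝ)
    have h4 : (t:ℝ) ≤ (e (φ (η τ)) : ℝ) := by linarith
    have h5 : (η (e (φ (η τ))) : ℝ) ≤ (η t : ℝ) := hdec_le t (e (φ (η τ))) h4
    rw [hre, hηt] at h5
    have hη2 : η τ = s := by rw [hτs]; exact hre s
    rwa [hη2] at h5

theorem conjugation_bijOn_Phi1_Psi1 (η : Set.Ioc (0:ℝ) 1 → Set.Ici (0:ℝ))
    (hbij : Function.Bijective η)
    (hdec : ∀ a b : Set.Ioc (0:ℝ) 1, (a:ℝ) < (b:ℝ) → (η b : ℝ) < (η a : ℝ)) :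
    Set.BijOn (fun φ : Set.Ici (0:ℝ) → Set.Ici (0:ℝ) => Function.invFun η ∘ φ ∘ η)
      {φ | Phi1 φ} {ψ | Psi1 ψ} := by
  have hre : ∀ y, η (Function.invFun η y) = y := Function.rightInverse_invFun hbij.2
  have hli : ∀ x, Function.invFun η (η x) = x := Function.leftInverse_invFun hbij.1
  set T := fun φ : Set.Ici (0:ℝ) → Set.Ici (0:ℝ) => Function.invFun η ∘ φ ∘ η with hT
  set S := fun ψ : Set.Ioc (0:ℝ) 1 → Set.Ioc (0:ℝ) 1 => η ∘ ψ ∘ Function.invFun η with hS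
  have hST : ∀ φ, S (T φ) = φ := by
    intro φ; funext x
    simp only [hS, hT, Function.comp_apply, hre]
  have hTS : ∀ ψ, T (S ψ) = ψ := by
    intro ψ; funext x
    simp only [hS, hT, Function.comp_apply, hli]
  refine ⟨?_, ?_, ?_⟩
  · intro φ hφ
    exact (conj_key hbij hdec φ).mp hφ
  · intro φ1 _ φ2 _ h
    have := congrArg S h
    rwa [hST, hST] at this
  · intro ψ hψ
    refine ⟨S ψ, ?_, hTS ψ⟩
    have : Psi1 (T (S ψ)) := by rw [hTS]; exact hψ
    exact (conj_key hbij hdec (S ψ)).mpr this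
end

section
/- If η∈𝓗 is a strictly decreasing bijection (0,1]→[0,∞), φ∈Φ₁, and ψ=η⁻¹∘φ∘η, then ψ∈Ψ₁. -/
theorem conj_of_Phi1_mem_Psi1 (η : Set.Ioc (0:ℝ) 1 → Set.Ici (0:ℝ))
    (hbij : Function.Bijective η)
    (hdec : ∀ a b : Set.Ioc (0:ℝ) 1, (a:ℝ) < (b:ℝ) → (η b : ℝ) < (η a : ℝ))
    (φ : Set.Ici (0:ℝ) → Set.Ici (0:ℝ)) (hφ : Phi1 φ)
    (ψ : Set.Ioc (0:ℝ) 1 → Set.Ioc (0:ℝ) 1)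
    (hψ : ψ = Function.invFun η ∘ φ ∘ η) :
    Psi1 ψ := by
  intro r hr0 hr1
  have hrinv : Function.RightInverse (Function.invFun η) η :=
    Function.rightInverse_invFun hbij.surjective
  set t : Set.Ioc (0:ℝ) 1 := ⟨1 - r, by constructor <;> linarith⟩ with ht
  set one : Set.Ioc (0:ℝ) 1 := ⟨1, by norm_num⟩ with hone
  have hε0 : 0 < (η t : ℝ) := by
    have h1 : (η one : ℝ) < (η t : ℝ) := hdec t one (by simp [ht, hone]; linarith)
    have := (η one).2
    simp only [Set.mem_Ici] at this
    linarith
  obtain ⟨δ, hδε, hδ⟩ := hφ (η t) hε0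
  have hδ0 : (0:ℝ) ≤ δ := by linarith
  set u : Set.Ioc (0:ℝ) 1 := Function.invFun η ⟨δ, hδ0⟩ with hu
  have hηu : (η u : ℝ) = δ := by
    rw [hu, hrinv ⟨δ, hδ0⟩]
  have hut : (u : ℝ) < (t : ℝ) := by
    by_contra h
    push_neg at h
    rcases eq_or_lt_of_le h with h | h
    · have : (η u : ℝ) = (η t : ℝ) := by
        congr 1; exact congrArg η (Subtype.ext h.symm)
      rw [hηu] at this; linarith
    · have := hdec t u h
      rw [hηu] at this; linarith
  refine ⟨1 - (u : ℝ), by simp [ht] at hut; linarith, by have := u.2.1; linarith, ?_⟩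
  intro τ hτ1 hτ2
  have hτu : (u : ℝ) < (τ : ℝ) := by linarith
  have hτt : (τ : ℝ) < (t : ℝ) := by simp [ht]; linarith
  have h1 : (η t : ℝ) < (η τ : ℝ) := hdec τ t hτt
  have h2 : (η τ : ℝ) < δ := by rw [← hηu]; exact hdec u τ hτu
  have h3 : (φ (η τ) : ℝ) ≤ (η t : ℝ) := hδ (η τ) h1 h2
  have hψτ : η (ψ τ) = φ (η τ) := by
    rw [hψ]; simp only [Function.comp_apply]; exact hrinv (φ (η τ))
  by_contra hc
  push_neg at hc
  have hlt : ((ψ τ : Set.Ioc (0:ℝ) 1) : ℝ) < (t : ℝ) := by simp [ht]; linarith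
  have := hdec (ψ τ) t hlt
  rw [hψτ] at this
  linarith
end
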